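/- arXiv:1803.02661 — 2 statements merged into one kernel-verified Lean document; each statement's English description precedes it below -/
import Mathlib

section
/- Let A ∈ ℝ^{n×d} with rank(A) ≥ k and σ_k(A) > σ_{k+1}(A), and let G be any matrix with d columns such that ‖A G^T G A^T − A A^T‖₂ ≤ ε·σ₁(A)² for some ε < gap_k(A). Then AG^T has rank at least k and d₂(U_{AG^T,k}, U_{A,k}) ≤ ε / (gap_k(A) − ε). -/
open Matrix MeasureTheory

noncomputable section

/-- Euclidean norm of a vector in `ℝ^n`. -/
def vnorm {n : ℕ} (v : Fin n → ℝ) : ℝ := Real.sqrt (∑ i, v i ^ 2)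

/-- Spectral norm of a matrix (operator norm as a map between Euclidean spaces). -/
def spec {m n : ℕ} (M : Matrix (Fin m) (Fin n) ℝ) : ℝ :=
  ‖LinearMap.toContinuousLinearMap (Matrix.toEuclideanLin M)‖

/-- The four Moore-Penrose conditions. -/
def IsMP {m n : ℕ} (X : Matrix (Fin m) (Fin n) ℝ) (Y : Matrix (Fin n) (Fin m) ℝ) : Prop :=
  X * Y * X = X ∧ Y * X * Y = Y ∧ (X * Y)ᵀ = X * Y ∧ (Y * X)ᵀ = Y * X

/-- The Moore-Penrose pseudoinverse (it always exists and is unique, so this choice-based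
definition picks out exactly the Moore-Penrose pseudoinverse). -/
def pinv {m n : ℕ} (X : Matrix (Fin m) (Fin n) ℝ) : Matrix (Fin n) (Fin m) ℝ := by
  classical exact if h : ∃ Y, IsMP X Y then h.choose else 0

/-- Orthogonal projection onto the column space of a matrix: `P_X = X X⁺`. -/
def projCol {m n : ℕ} (X : Matrix (Fin m) (Fin n) ℝ) : Matrix (Fin m) (Fin m) ℝ := X * pinv X

/-- Distance between column spaces: `d₂(U, W) = ‖P_U - P_W‖₂`. -/
def d2 {m p q : ℕ} (U : Matrix (Fin m) (Fin p) ℝ) (W : Matrix (Fin m) (Fin q) ℝ) : ℝ :=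
  spec (projCol U - projCol W)

/-- `(U, s, V)` is a thin SVD of `X`: orthonormal columns, nonincreasing nonnegative
singular values, and `X = U (diag s) Vᵀ`. -/
def IsThinSVD {m n p : ℕ} (X : Matrix (Fin m) (Fin n) ℝ) (U : Matrix (Fin m) (Fin p) ℝ)
    (s : Fin p → ℝ) (V : Matrix (Fin n) (Fin p) ℝ) : Prop :=
  Uᵀ * U = 1 ∧ Vᵀ * V = 1 ∧ Antitone s ∧ (∀ i, 0 ≤ s i) ∧ X = U * Matrix.diagonal s * Vᵀ

/-- The matrix of the first `k` columns. -/
def firstCols {m p : ℕ} (U : Matrix (Fin m) (Fin p) ℝ) (k : ℕ) (h : k ≤ p) :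
    Matrix (Fin m) (Fin k) ℝ := U.submatrix id (Fin.castLE h)

/-- The matrix of the remaining columns (columns `k+1, …, p` in 1-based indexing). -/
def tailCols {m p : ℕ} (U : Matrix (Fin m) (Fin p) ℝ) (k : ℕ) (h : k ≤ p) :
    Matrix (Fin m) (Fin (p - k)) ℝ :=
  U.submatrix id (fun j => ⟨k + j.1, by have := j.2; omega⟩)

/-- `sv s i` is the `i`-th singular value (1-indexed), `0` past the end. -/
def sv {p : ℕ} (s : Fin p → ℝ) (i : ℕ) : ℝ := by
  classical exact if h : i - 1 < p then s ⟨i - 1, h⟩ else 0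

end

/-!
Write `M = A Aᵀ` and `M' = (A Gᵀ)(A Gᵀ)ᵀ`, so that `‖M' - M‖ ≤ δ := ε σ₁²`; the leading `k` left
singular vectors of `A` and of `A Gᵀ` span the top-`k` eigenspaces `P` and `Q` of `M` and `M'`.
On `P` the form of `M'` is at least `σ_k² - δ > 0`, which gives the rank bound. The
Courant–Fischer argument gives Weyl's inequalities `σ_k(AGᵀ)² ≥ σ_k² - δ` and
`σ_{k+1}(AGᵀ)² ≤ σ_{k+1}² + δ`, so each eigenspace is separated from the complementary spectrum
of the other matrix by at least `σ_k² - σ_{k+1}² - δ`. The one-sided Davis–Kahan argument,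
evaluated on a top singular vector, turns this separation into
`‖(1 - Q) P‖, ‖(1 - P) Q‖ ≤ δ / (σ_k² - σ_{k+1}² - δ)`, and `‖Q - P‖` is at most the larger of
the two.
-/

section SpectralNorm

open scoped Matrix.Norms.L2Operator

variable {m n : ℕ}

lemma dotProduct_self_nonneg (v : Fin n → ℝ) : 0 ≤ v ⬝ᵥ v :=
  Finset.sum_nonneg fun i _ => mul_self_nonneg (v i)

lemma norm_toLp_eq_sqrt_dotProduct (v : Fin n → ℝ) : ‖WithLp.toLp 2 v‖ = √(v ⬝ᵥ v) := by
  rw [EuclideanSpace.norm_eq]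
  simp [dotProduct, pow_two]

lemma spec_eq_norm (M : Matrix (Fin m) (Fin n) ℝ) : spec M = ‖M‖ := rfl

lemma spec_nonneg (M : Matrix (Fin m) (Fin n) ℝ) : 0 ≤ spec M := norm_nonneg _

lemma spec_zero : spec (0 : Matrix (Fin m) (Fin n) ℝ) = 0 := (spec_eq_norm 0).trans norm_zero

lemma spec_transpose (M : Matrix (Fin m) (Fin n) ℝ) : spec Mᵀ = spec M := by
  rw [spec_eq_norm, spec_eq_norm, ← conjTranspose_eq_transpose_of_trivial,
    l2_opNorm_conjTranspose]

lemma spec_sub_comm (M N : Matrix (Fin m) (Fin n) ℝ) : spec (M - N) = spec (N - M) :=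
  norm_sub_rev M N

lemma sqrt_dotProduct_mulVec_self_le (M : Matrix (Fin m) (Fin n) ℝ) (x : Fin n → ℝ) :
    √((M *ᵥ x) ⬝ᵥ (M *ᵥ x)) ≤ spec M * √(x ⬝ᵥ x) := by
  simpa [spec_eq_norm, ← norm_toLp_eq_sqrt_dotProduct] using l2_opNorm_mulVec M (WithLp.toLp 2 x)

lemma dotProduct_mulVec_self_le (M : Matrix (Fin m) (Fin n) ℝ) (x : Fin n → ℝ) :
    (M *ᵥ x) ⬝ᵥ (M *ᵥ x) ≤ spec M ^ 2 * (x ⬝ᵥ x) := by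
  have h := pow_le_pow_left₀ (Real.sqrt_nonneg _) (sqrt_dotProduct_mulVec_self_le M x) 2
  rwa [mul_pow, Real.sq_sqrt (dotProduct_self_nonneg _),
    Real.sq_sqrt (dotProduct_self_nonneg _)] at h

lemma spec_le_of_forall_dotProduct_mulVec_self_le {M : Matrix (Fin m) (Fin n) ℝ} {C : ℝ}
    (hC : 0 ≤ C) (h : ∀ x, (M *ᵥ x) ⬝ᵥ (M *ᵥ x) ≤ C ^ 2 * (x ⬝ᵥ x)) : spec M ≤ C := by
  refine ContinuousLinearMap.opNorm_le_bound _ hC fun x => ?_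
  have hx := Real.sqrt_le_sqrt (h x.ofLp)
  rwa [Real.sqrt_mul (sq_nonneg C), Real.sqrt_sq hC, ← norm_toLp_eq_sqrt_dotProduct,
    ← norm_toLp_eq_sqrt_dotProduct] at hx

lemma abs_dotProduct_mulVec_le (M : Matrix (Fin m) (Fin n) ℝ) (x : Fin m → ℝ) (y : Fin n → ℝ) :
    |x ⬝ᵥ (M *ᵥ y)| ≤ spec M * √(x ⬝ᵥ x) * √(y ⬝ᵥ y) := by
  have hxy : x ⬝ᵥ (M *ᵥ y) = inner ℝ (WithLp.toLp 2 x) (WithLp.toLp 2 (M *ᵥ y)) := by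
    simp [EuclideanSpace.inner_eq_star_dotProduct, dotProduct_comm]
  rw [hxy, mul_comm (spec M), mul_assoc, ← norm_toLp_eq_sqrt_dotProduct x]
  refine (abs_real_inner_le_norm _ _).trans (mul_le_mul_of_nonneg_left ?_ (norm_nonneg _))
  rw [norm_toLp_eq_sqrt_dotProduct]
  exact sqrt_dotProduct_mulVec_self_le M y

lemma abs_dotProduct_mulVec_self_le (M : Matrix (Fin n) (Fin n) ℝ) (v : Fin n → ℝ) :
    |v ⬝ᵥ (M *ᵥ v)| ≤ spec M * (v ⬝ᵥ v) := by
  have h := abs_dotProduct_mulVec_le M v v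
  rwa [mul_assoc, Real.mul_self_sqrt (dotProduct_self_nonneg v)] at h

end SpectralNorm

section OrthonormalColumns

variable {m p : ℕ}

lemma transpose_mulVec_dotProduct (U : Matrix (Fin m) (Fin p) ℝ) (v : Fin m → ℝ)
    (y : Fin p → ℝ) : (Uᵀ *ᵥ v) ⬝ᵥ y = v ⬝ᵥ (U *ᵥ y) := by
  rw [dotProduct_mulVec, mulVec_transpose]

lemma mulVec_dotProduct_mulVec_self {U : Matrix (Fin m) (Fin p) ℝ} (hU : Uᵀ * U = 1)
    (c : Fin p → ℝ) : (U *ᵥ c) ⬝ᵥ (U *ᵥ c) = c ⬝ᵥ c := by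
  rw [← transpose_mulVec_dotProduct, mulVec_mulVec, hU, one_mulVec]

lemma transpose_mulVec_dotProduct_self_le {U : Matrix (Fin m) (Fin p) ℝ} (hU : Uᵀ * U = 1)
    (v : Fin m → ℝ) : (Uᵀ *ᵥ v) ⬝ᵥ (Uᵀ *ᵥ v) ≤ v ⬝ᵥ v := by
  set y := Uᵀ *ᵥ v
  have hvy : v ⬝ᵥ (U *ᵥ y) = y ⬝ᵥ y := (transpose_mulVec_dotProduct U v y).symm
  have h := dotProduct_self_nonneg (v - U *ᵥ y)
  rw [sub_dotProduct, dotProduct_sub, dotProduct_sub, mulVec_dotProduct_mulVec_self hU,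
    dotProduct_comm (U *ᵥ y), hvy] at h
  linarith

lemma firstCols_eq_mul (U : Matrix (Fin m) (Fin p) ℝ) {k : ℕ} (h : k ≤ p) :
    firstCols U k h = U * firstCols (1 : Matrix (Fin p) (Fin p) ℝ) k h :=
  (mul_submatrix_one (Equiv.refl (Fin p)) (Fin.castLE h) U).symm

lemma firstCols_transpose_mul_self {U : Matrix (Fin m) (Fin p) ℝ} (hU : Uᵀ * U = 1)
    {k : ℕ} (h : k ≤ p) : (firstCols U k h)ᵀ * firstCols U k h = 1 := by
  rw [firstCols, transpose_submatrix, ← submatrix_mul _ _ _ _ _ Function.bijective_id, hU,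
    submatrix_one _ (Fin.castLE_injective h)]

lemma firstCols_transpose_mulVec_apply (U : Matrix (Fin m) (Fin p) ℝ) {k : ℕ} (h : k ≤ p)
    (v : Fin m → ℝ) (j : Fin k) :
    ((firstCols U k h)ᵀ *ᵥ v) j = (Uᵀ *ᵥ v) (Fin.castLE h j) := by
  simp [mulVec, firstCols, dotProduct]

lemma IsMP.unique {X : Matrix (Fin m) (Fin p) ℝ} {Y Z : Matrix (Fin p) (Fin m) ℝ}
    (hY : IsMP X Y) (hZ : IsMP X Z) : Y = Z := by
  obtain ⟨hY1, hY2, hY3, hY4⟩ := hY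
  obtain ⟨hZ1, hZ2, hZ3, hZ4⟩ := hZ
  have hXY : X * Y = X * Z := calc
    X * Y = (X * Z * X * Y)ᵀ := by rw [hZ1, hY3]
    _ = X * Y * (X * Z) := by rw [Matrix.mul_assoc (X * Z), transpose_mul, hY3, hZ3]
    _ = X * Z := by rw [← Matrix.mul_assoc, hY1]
  have hYX : Y * X = Z * X := calc
    Y * X = (Y * X * Z * X)ᵀ := by
      rw [show Y * X * Z * X = Y * (X * Z * X) by simp only [Matrix.mul_assoc], hZ1, hY4]
    _ = Z * X * (Y * X) := by rw [Matrix.mul_assoc (Y * X), transpose_mul, hY4, hZ4]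
    _ = Z * X := by rw [Matrix.mul_assoc Z, ← Matrix.mul_assoc X, hY1]
  calc Y = Y * X * Y := hY2.symm
    _ = Z * X * Z := by rw [Matrix.mul_assoc, hXY, ← Matrix.mul_assoc, hYX]
    _ = Z := hZ2

lemma pinv_eq_of_isMP {X : Matrix (Fin m) (Fin p) ℝ} {Y : Matrix (Fin p) (Fin m) ℝ}
    (hY : IsMP X Y) : pinv X = Y := by
  have hex : ∃ Y, IsMP X Y := ⟨Y, hY⟩
  rw [pinv, dif_pos hex]
  exact hex.choose_spec.unique hY

lemma projCol_eq_mul_transpose {U : Matrix (Fin m) (Fin p) ℝ} (hU : Uᵀ * U = 1) :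
    projCol U = U * Uᵀ := by
  rw [projCol, pinv_eq_of_isMP (Y := Uᵀ)]
  refine ⟨?_, ?_, ?_, ?_⟩
  · rw [Matrix.mul_assoc, hU, Matrix.mul_one]
  · rw [hU, Matrix.one_mul]
  · rw [transpose_mul, transpose_transpose]
  · rw [hU, transpose_one]

end OrthonormalColumns

section DiagonalQuadraticForm

variable {m p : ℕ} {U : Matrix (Fin m) (Fin p) ℝ}

lemma mul_diagonal_mul_transpose_mul_firstCols (hU : Uᵀ * U = 1) {k : ℕ} (h : k ≤ p)
    (w : Fin p → ℝ) :
    U * diagonal w * Uᵀ * firstCols U k h = firstCols U k h * diagonal (w ∘ Fin.castLE h) := by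
  have hJ : diagonal w * firstCols (1 : Matrix (Fin p) (Fin p) ℝ) k h
      = firstCols 1 k h * diagonal (w ∘ Fin.castLE h) := by
    ext i j
    by_cases hij : i = Fin.castLE h j
    · subst hij; simp [firstCols, mul_comm]
    · simp [firstCols, hij]
  rw [firstCols_eq_mul U h, ← Matrix.mul_assoc, Matrix.mul_assoc (U * diagonal w), hU,
    Matrix.mul_one, Matrix.mul_assoc, hJ, Matrix.mul_assoc]

lemma dotProduct_mul_diagonal_mul_transpose_mulVec (w : Fin p → ℝ) (v : Fin m → ℝ) :
    v ⬝ᵥ ((U * diagonal w * Uᵀ) *ᵥ v) = ∑ i, w i * (Uᵀ *ᵥ v) i ^ 2 := by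
  rw [← mulVec_mulVec, ← mulVec_mulVec, ← transpose_mulVec_dotProduct]
  simp only [dotProduct, mulVec_diagonal]
  exact Finset.sum_congr rfl fun i _ => by ring

lemma mul_dotProduct_le_of_firstCols (hU : Uᵀ * U = 1) {k : ℕ} (h : k ≤ p) {w : Fin p → ℝ}
    {a : ℝ} (hw : ∀ j : Fin k, a ≤ w (Fin.castLE h j)) (c : Fin k → ℝ) :
    a * (c ⬝ᵥ c) ≤ (firstCols U k h *ᵥ c) ⬝ᵥ ((U * diagonal w * Uᵀ) *ᵥ (firstCols U k h *ᵥ c)) := by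
  rw [mulVec_mulVec, mul_diagonal_mul_transpose_mul_firstCols hU h, ← mulVec_mulVec,
    ← transpose_mulVec_dotProduct, mulVec_mulVec, firstCols_transpose_mul_self hU h, one_mulVec]
  simp only [dotProduct, mulVec_diagonal, Finset.mul_sum, Function.comp_apply]
  exact Finset.sum_le_sum fun j _ => by nlinarith [hw j, mul_self_nonneg (c j)]

lemma dotProduct_mulVec_le_of_firstCols_transpose_mulVec_eq_zero (hU : Uᵀ * U = 1) {j : ℕ}
    (h : j ≤ p) {w : Fin p → ℝ} {t : ℝ} (ht : 0 ≤ t) (hw : ∀ i : Fin p, j ≤ i → w i ≤ t)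
    {v : Fin m → ℝ} (hv : (firstCols U j h)ᵀ *ᵥ v = 0) :
    v ⬝ᵥ ((U * diagonal w * Uᵀ) *ᵥ v) ≤ t * (v ⬝ᵥ v) := by
  have hzero : ∀ i : Fin p, i < j → (Uᵀ *ᵥ v) i = 0 := fun i hi => by
    simpa [firstCols_transpose_mulVec_apply] using congrFun hv ⟨i, hi⟩
  rw [dotProduct_mul_diagonal_mul_transpose_mulVec]
  refine le_trans ?_ (mul_le_mul_of_nonneg_left (transpose_mulVec_dotProduct_self_le hU v) ht)
  simp only [dotProduct, Finset.mul_sum]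
  refine Finset.sum_le_sum fun i _ => ?_
  rcases lt_or_ge (i : ℕ) j with hi | hi
  · simp [hzero i hi]
  · nlinarith [hw i hi, sq_nonneg ((Uᵀ *ᵥ v) i)]

end DiagonalQuadraticForm

section MinMax

variable {n p q : ℕ} {X : Matrix (Fin n) (Fin p) ℝ} {N N' : Matrix (Fin n) (Fin n) ℝ} {a : ℝ}

lemma sub_mul_dotProduct_le_of_spec_sub_le (hX : Xᵀ * X = 1)
    (hlow : ∀ c, a * (c ⬝ᵥ c) ≤ (X *ᵥ c) ⬝ᵥ (N *ᵥ (X *ᵥ c))) {δ : ℝ} (hE : spec (N - N') ≤ δ)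
    (c : Fin p → ℝ) : (a - δ) * (c ⬝ᵥ c) ≤ (X *ᵥ c) ⬝ᵥ (N' *ᵥ (X *ᵥ c)) := by
  have hsplit : (X *ᵥ c) ⬝ᵥ (N' *ᵥ (X *ᵥ c))
      = (X *ᵥ c) ⬝ᵥ (N *ᵥ (X *ᵥ c)) - (X *ᵥ c) ⬝ᵥ ((N - N') *ᵥ (X *ᵥ c)) := by
    rw [sub_mulVec, dotProduct_sub, sub_sub_cancel]
  have hE' := (le_abs_self _).trans (abs_dotProduct_mulVec_self_le (N - N') (X *ᵥ c))
  rw [mulVec_dotProduct_mulVec_self hX] at hE'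
  nlinarith [hlow c, dotProduct_self_nonneg c]

lemma le_rank_of_mul_dotProduct_le (ha : 0 < a)
    (hlow : ∀ c, a * (c ⬝ᵥ c) ≤ (X *ᵥ c) ⬝ᵥ (N *ᵥ (X *ᵥ c))) : p ≤ N.rank := by
  have hinj : Function.Injective (mulVecLin (N * X)) := by
    rw [← LinearMap.ker_eq_bot, LinearMap.ker_eq_bot']
    intro c hc
    have h := hlow c
    rw [mulVecLin_apply, ← mulVec_mulVec] at hc
    rw [hc, dotProduct_zero] at h
    exact dotProduct_self_eq_zero.1 (le_antisymm (nonpos_of_mul_nonpos_right h ha)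
      (dotProduct_self_nonneg c))
  calc p = (N * X).rank := by
        rw [rank, LinearMap.finrank_range_of_inj hinj, Module.finrank_fin_fun]
    _ ≤ N.rank := rank_mul_le_left N X

/-- The Courant–Fischer argument: the span of the `p` columns of `X` meets the orthogonal
complement of the `q < p` columns of `Y`. -/
lemma le_of_lowerBound_on_span_of_upperBound_on_orthogonal (hX : Xᵀ * X = 1) (hqp : q < p)
    (hlow : ∀ c, a * (c ⬝ᵥ c) ≤ (X *ᵥ c) ⬝ᵥ (N *ᵥ (X *ᵥ c))) (Y : Matrix (Fin n) (Fin q) ℝ)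
    {b : ℝ} (hup : ∀ v, Yᵀ *ᵥ v = 0 → v ⬝ᵥ (N *ᵥ v) ≤ b * (v ⬝ᵥ v)) : a ≤ b := by
  have hker : LinearMap.ker (mulVecLin (Yᵀ * X)) ≠ ⊥ :=
    LinearMap.ker_ne_bot_of_finrank_lt (by simpa using hqp)
  obtain ⟨c, hc, hc0⟩ := (Submodule.ne_bot_iff _).1 hker
  rw [LinearMap.mem_ker, mulVecLin_apply, ← mulVec_mulVec] at hc
  have hpos : 0 < c ⬝ᵥ c := lt_of_le_of_ne (dotProduct_self_nonneg c)
    (Ne.symm (mt dotProduct_self_eq_zero.1 hc0))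
  have h := (hlow c).trans (hup _ hc)
  rw [mulVec_dotProduct_mulVec_self hX] at h
  exact le_of_mul_le_mul_right h hpos

end MinMax

section TopSingularVector

variable {m n : ℕ}

lemma dotProduct_transpose_mul_self_mulVec (R : Matrix (Fin m) (Fin n) ℝ) (x : Fin n → ℝ) :
    x ⬝ᵥ ((Rᵀ * R) *ᵥ x) = (R *ᵥ x) ⬝ᵥ (R *ᵥ x) := by
  rw [← mulVec_mulVec, ← transpose_mulVec_dotProduct, transpose_transpose]

lemma exists_transpose_mul_self_mulVec_eq (R : Matrix (Fin m) (Fin n) ℝ) (hR : 0 < spec R) :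
    ∃ c : Fin n → ℝ, c ⬝ᵥ c = 1 ∧ (Rᵀ * R) *ᵥ c = spec R ^ 2 • c := by
  have hS : (Rᵀ * R).IsHermitian := by
    simpa [conjTranspose_eq_transpose_of_trivial] using isHermitian_conjTranspose_mul_self R
  have hn : Nonempty (Fin n) := by
    by_contra h
    have : IsEmpty (Fin n) := not_nonempty_iff.1 h
    rw [Subsingleton.elim R 0, spec_zero] at hR
    exact lt_irrefl _ hR
  obtain ⟨i, -, hmax⟩ := Finset.exists_max_image Finset.univ hS.eigenvalues Finset.univ_nonempty
  set U : Matrix (Fin n) (Fin n) ℝ := ↑hS.eigenvectorUnitary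
  have hU : Uᵀ * U = 1 := by
    simpa [U, star_eq_conjTranspose, conjTranspose_eq_transpose_of_trivial] using
      Unitary.coe_star_mul_self hS.eigenvectorUnitary
  have hRU : Rᵀ * R = U * diagonal hS.eigenvalues * Uᵀ := by
    conv_lhs => rw [hS.spectral_theorem]
    simp [U, star_eq_conjTranspose, conjTranspose_eq_transpose_of_trivial]
  set c := ⇑(hS.eigenvectorBasis i)
  have hc1 : c ⬝ᵥ c = 1 := by
    rw [show c = U *ᵥ Pi.single i 1 from (hS.eigenvectorUnitary_mulVec i).symm,
      mulVec_dotProduct_mulVec_self hU]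
    simp
  have hev : hS.eigenvalues i = (R *ᵥ c) ⬝ᵥ (R *ᵥ c) := by
    rw [← dotProduct_transpose_mul_self_mulVec, hS.mulVec_eigenvectorBasis i, dotProduct_smul,
      hc1, smul_eq_mul, mul_one]
  have hev0 : 0 ≤ hS.eigenvalues i := hev ▸ dotProduct_self_nonneg _
  refine ⟨c, hc1, ?_⟩
  suffices spec R ^ 2 = hS.eigenvalues i by rw [this]; exact hS.mulVec_eigenvectorBasis i
  apply le_antisymm
  · have hle : spec R ≤ √(hS.eigenvalues i) := by
      refine spec_le_of_forall_dotProduct_mulVec_self_le (Real.sqrt_nonneg _) fun x => ?_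
      have h := dotProduct_mulVec_le_of_firstCols_transpose_mulVec_eq_zero hU (Nat.zero_le n)
        hev0 (fun j _ => hmax j (Finset.mem_univ j)) (v := x) (Subsingleton.elim _ _)
      rwa [← hRU, dotProduct_transpose_mul_self_mulVec, ← Real.sq_sqrt hev0] at h
    calc spec R ^ 2 ≤ √(hS.eigenvalues i) ^ 2 := pow_le_pow_left₀ (spec_nonneg R) hle 2
      _ = hS.eigenvalues i := Real.sq_sqrt hev0
  · simpa [hev, hc1] using dotProduct_mulVec_self_le R c

end TopSingularVector

section Projections

variable {n k l : ℕ} {U : Matrix (Fin n) (Fin k) ℝ} {W : Matrix (Fin n) (Fin l) ℝ}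

lemma transpose_one_sub_mul_transpose (W : Matrix (Fin n) (Fin l) ℝ) :
    (1 - W * Wᵀ)ᵀ = 1 - W * Wᵀ := by
  rw [transpose_sub, transpose_one, transpose_mul, transpose_transpose]

lemma transpose_mul_one_sub_mul_transpose (hW : Wᵀ * W = 1) : Wᵀ * (1 - W * Wᵀ) = 0 := by
  rw [Matrix.mul_sub, Matrix.mul_one, ← Matrix.mul_assoc, hW, Matrix.one_mul, sub_self]

lemma one_sub_mul_transpose_mul_self (hW : Wᵀ * W = 1) :
    (1 - W * Wᵀ) * (1 - W * Wᵀ) = 1 - W * Wᵀ := by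
  rw [Matrix.sub_mul, Matrix.one_mul, Matrix.mul_assoc, transpose_mul_one_sub_mul_transpose hW,
    Matrix.mul_zero, sub_zero]

lemma dotProduct_sub_mulVec_mulVec_eq (hU : Uᵀ * U = 1) {N N' : Matrix (Fin n) (Fin n) ℝ}
    {C : Matrix (Fin k) (Fin k) ℝ} {C' : Matrix (Fin l) (Fin l) ℝ} (hNU : N * U = U * C)
    (hN'W : N' * W = W * C') {c : Fin k → ℝ} {u : Fin n → ℝ} {μ : ℝ}
    (hu : u = ((1 - W * Wᵀ) * U) *ᵥ c) (hUu : Uᵀ *ᵥ u = μ • c) (hWu : Wᵀ *ᵥ u = 0) :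
    u ⬝ᵥ ((N' - N) *ᵥ (U *ᵥ c))
      = u ⬝ᵥ (N' *ᵥ u) - μ * ((U *ᵥ c) ⬝ᵥ (N *ᵥ (U *ᵥ c))) := by
  -- `U c` splits as `u + W Wᵀ U c`, and `N'` maps the second part into the range of `W`.
  have hN' : u ⬝ᵥ (N' *ᵥ (U *ᵥ c)) = u ⬝ᵥ (N' *ᵥ u) := by
    have hUc : U *ᵥ c = u + W *ᵥ (Wᵀ *ᵥ (U *ᵥ c)) := by
      rw [hu, ← mulVec_mulVec, sub_mulVec, one_mulVec, ← mulVec_mulVec, sub_add_cancel]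
    have hWy : u ⬝ᵥ (N' *ᵥ (W *ᵥ (Wᵀ *ᵥ (U *ᵥ c)))) = 0 := by
      rw [mulVec_mulVec _ N' W, hN'W, ← mulVec_mulVec, ← transpose_mulVec_dotProduct W, hWu,
        zero_dotProduct]
    rw [hUc, mulVec_add, dotProduct_add, hWy, add_zero]
  have hN : u ⬝ᵥ (N *ᵥ (U *ᵥ c)) = μ * ((U *ᵥ c) ⬝ᵥ (N *ᵥ (U *ᵥ c))) := by
    have hNUc : N *ᵥ (U *ᵥ c) = U *ᵥ (C *ᵥ c) := by rw [mulVec_mulVec, hNU, mulVec_mulVec]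
    rw [hNUc, ← transpose_mulVec_dotProduct U u, hUu, ← transpose_mulVec_dotProduct U (U *ᵥ c),
      mulVec_mulVec c Uᵀ U, hU, one_mulVec, smul_dotProduct, smul_eq_mul]
  rw [sub_mulVec, dotProduct_sub, hN', hN]

/-- The one-sided Davis–Kahan `sin θ` bound. -/
lemma spec_one_sub_mul_transpose_mul_mul_sub_le (hU : Uᵀ * U = 1) (hW : Wᵀ * W = 1)
    {N N' : Matrix (Fin n) (Fin n) ℝ} {C : Matrix (Fin k) (Fin k) ℝ}
    {C' : Matrix (Fin l) (Fin l) ℝ} (hNU : N * U = U * C) (hN'W : N' * W = W * C') {a b δ : ℝ}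
    (hlow : ∀ c, a * (c ⬝ᵥ c) ≤ (U *ᵥ c) ⬝ᵥ (N *ᵥ (U *ᵥ c)))
    (hup : ∀ v, Wᵀ *ᵥ v = 0 → v ⬝ᵥ (N' *ᵥ v) ≤ b * (v ⬝ᵥ v)) (hE : spec (N' - N) ≤ δ) :
    spec ((1 - W * Wᵀ) * U) * (a - b) ≤ δ := by
  set R := (1 - W * Wᵀ) * U
  rcases (spec_nonneg R).eq_or_lt with h0 | hR
  · rw [← h0, zero_mul]
    exact (spec_nonneg _).trans hE
  obtain ⟨c, hc1, hRc⟩ := exists_transpose_mul_self_mulVec_eq R hR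
  set u := R *ᵥ c
  have hUu : Uᵀ *ᵥ u = spec R ^ 2 • c := by
    rw [← hRc, mulVec_mulVec, transpose_mul, transpose_one_sub_mul_transpose, Matrix.mul_assoc,
      ← Matrix.mul_assoc (1 - W * Wᵀ), one_sub_mul_transpose_mul_self hW]
  have hWu : Wᵀ *ᵥ u = 0 := by
    rw [mulVec_mulVec, ← Matrix.mul_assoc, transpose_mul_one_sub_mul_transpose hW,
      Matrix.zero_mul, zero_mulVec]
  have huu : u ⬝ᵥ u = spec R ^ 2 := by
    rw [← dotProduct_transpose_mul_self_mulVec, hRc, dotProduct_smul, hc1, smul_eq_mul, mul_one]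
  have hsplit := dotProduct_sub_mulVec_mulVec_eq hU hNU hN'W rfl hUu hWu
  have hCS : |u ⬝ᵥ ((N' - N) *ᵥ (U *ᵥ c))| ≤ δ * spec R := by
    refine (abs_dotProduct_mulVec_le _ _ _).trans ?_
    rw [huu, mulVec_dotProduct_mulVec_self hU, hc1, Real.sqrt_one, mul_one,
      Real.sqrt_sq (spec_nonneg R)]
    exact mul_le_mul_of_nonneg_right hE (spec_nonneg R)
  rw [hsplit] at hCS
  have hqa := hlow c
  have hqb := hup u hWu
  rw [hc1, mul_one] at hqa
  rw [huu] at hqb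
  have hkey : spec R * (spec R * (a - b)) ≤ spec R * δ := by
    nlinarith [neg_abs_le (u ⬝ᵥ (N' *ᵥ u) - spec R ^ 2 * ((U *ᵥ c) ⬝ᵥ (N *ᵥ (U *ᵥ c))))]
  exact le_of_mul_le_mul_left hkey hR

lemma dotProduct_one_sub_mul_transpose_mulVec_self (hW : Wᵀ * W = 1) (x : Fin n → ℝ) :
    ((1 - W * Wᵀ) *ᵥ x) ⬝ᵥ ((1 - W * Wᵀ) *ᵥ x) = x ⬝ᵥ x - (Wᵀ *ᵥ x) ⬝ᵥ (Wᵀ *ᵥ x) := by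
  rw [← dotProduct_transpose_mul_self_mulVec, transpose_one_sub_mul_transpose,
    one_sub_mul_transpose_mul_self hW, sub_mulVec, one_mulVec, dotProduct_sub, ← mulVec_mulVec,
    transpose_mulVec_dotProduct]

lemma spec_mul_transpose_sub_mul_transpose_le (hU : Uᵀ * U = 1) (hW : Wᵀ * W = 1) {B : ℝ}
    (hB : 0 ≤ B) (hWU : spec ((1 - W * Wᵀ) * U) ≤ B) (hUW : spec ((1 - U * Uᵀ) * W) ≤ B) :
    spec (W * Wᵀ - U * Uᵀ) ≤ B := by
  refine spec_le_of_forall_dotProduct_mulVec_self_le hB fun x => ?_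
  set y := (1 - W * Wᵀ) *ᵥ x
  set a := ((1 - U * Uᵀ) * W) *ᵥ (Wᵀ *ᵥ x)
  have hsplit : (W * Wᵀ - U * Uᵀ) *ᵥ x = a - U *ᵥ (Uᵀ *ᵥ y) := by
    simp only [a, y, ← mulVec_mulVec, sub_mulVec, one_mulVec, mulVec_sub]
    abel
  have hUy : ((1 - W * Wᵀ) * U)ᵀ *ᵥ y = Uᵀ *ᵥ y := by
    rw [transpose_mul, transpose_one_sub_mul_transpose, ← mulVec_mulVec, mulVec_mulVec x,
      one_sub_mul_transpose_mul_self hW]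
  have horth : a ⬝ᵥ (U *ᵥ (Uᵀ *ᵥ y)) = 0 := by
    rw [← transpose_mulVec_dotProduct, mulVec_mulVec, ← Matrix.mul_assoc,
      transpose_mul_one_sub_mul_transpose hU, Matrix.zero_mul, zero_mulVec, zero_dotProduct]
  have ha := (dotProduct_mulVec_self_le _ (Wᵀ *ᵥ x)).trans
    (mul_le_mul_of_nonneg_right (pow_le_pow_left₀ (spec_nonneg _) hUW 2)
      (dotProduct_self_nonneg _))
  have hz := (dotProduct_mulVec_self_le _ y).trans
    (mul_le_mul_of_nonneg_right
      (pow_le_pow_left₀ (spec_nonneg _) ((spec_transpose _).trans_le hWU) 2)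
      (dotProduct_self_nonneg _))
  rw [hUy, dotProduct_one_sub_mul_transpose_mulVec_self hW] at hz
  rw [hsplit, sub_dotProduct, dotProduct_sub, dotProduct_sub, dotProduct_comm (U *ᵥ _), horth,
    mulVec_dotProduct_mulVec_self hU]
  nlinarith

end Projections

section SingularValues

variable {p : ℕ} {s : Fin p → ℝ}

lemma sv_succ (s : Fin p → ℝ) (i : Fin p) : sv s (i + 1) = s i := by
  simp [sv]

lemma sv_of_lt (s : Fin p → ℝ) {i : ℕ} (h : p < i) : sv s i = 0 := by
  rw [sv, dif_neg (by omega)]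

lemma sv_nonneg (hs : ∀ i, 0 ≤ s i) (i : ℕ) : 0 ≤ sv s i := by
  unfold sv
  split_ifs
  exacts [hs _, le_rfl]

lemma sv_antitone (hs : Antitone s) (hs0 : ∀ i, 0 ≤ s i) : Antitone (sv s) := by
  intro i j hij
  unfold sv
  split_ifs with hj hi hi
  · exact hs (Fin.mk_le_mk.2 (by omega))
  · omega
  · exact hs0 _
  · exact le_rfl

end SingularValues

namespace IsThinSVD

section

variable {n q p : ℕ} {X : Matrix (Fin n) (Fin q) ℝ} {U : Matrix (Fin n) (Fin p) ℝ}
  {s : Fin p → ℝ} {V : Matrix (Fin q) (Fin p) ℝ}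

lemma firstCols_transpose_mul_self (hX : IsThinSVD X U s V) {k : ℕ} (h : k ≤ p) :
    (firstCols U k h)ᵀ * firstCols U k h = 1 :=
  _root_.firstCols_transpose_mul_self hX.1 h

lemma sv_nonneg (hX : IsThinSVD X U s V) (i : ℕ) : 0 ≤ sv s i :=
  _root_.sv_nonneg hX.2.2.2.1 i

lemma sv_antitone (hX : IsThinSVD X U s V) : Antitone (sv s) :=
  _root_.sv_antitone hX.2.2.1 hX.2.2.2.1

lemma mul_transpose_eq (hX : IsThinSVD X U s V) :
    X * Xᵀ = U * diagonal (fun i => s i ^ 2) * Uᵀ := by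
  obtain ⟨-, hV, -, -, rfl⟩ := hX
  simp only [transpose_mul, transpose_transpose, diagonal_transpose, Matrix.mul_assoc]
  rw [← Matrix.mul_assoc Vᵀ, hV, Matrix.one_mul, ← Matrix.mul_assoc (diagonal s),
    diagonal_mul_diagonal]
  simp only [sq]

lemma sv_sq_mul_le (hX : IsThinSVD X U s V) {k : ℕ} (h : k ≤ p) (c : Fin k → ℝ) :
    sv s k ^ 2 * (c ⬝ᵥ c)
      ≤ (firstCols U k h *ᵥ c) ⬝ᵥ ((X * Xᵀ) *ᵥ (firstCols U k h *ᵥ c)) := by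
  rw [hX.mul_transpose_eq]
  refine mul_dotProduct_le_of_firstCols hX.1 h (fun j => ?_) c
  rw [← sv_succ s]
  exact pow_le_pow_left₀ (hX.sv_nonneg _) (hX.sv_antitone (by simp)) 2

lemma dotProduct_mulVec_le_sv_sq_mul (hX : IsThinSVD X U s V) {j : ℕ} (h : j ≤ p)
    {v : Fin n → ℝ} (hv : (firstCols U j h)ᵀ *ᵥ v = 0) :
    v ⬝ᵥ ((X * Xᵀ) *ᵥ v) ≤ sv s (j + 1) ^ 2 * (v ⬝ᵥ v) := by
  rw [hX.mul_transpose_eq]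
  refine dotProduct_mulVec_le_of_firstCols_transpose_mulVec_eq_zero hX.1 h (sq_nonneg _)
    (fun i hi => ?_) hv
  rw [← sv_succ s]
  exact pow_le_pow_left₀ (hX.sv_nonneg _) (hX.sv_antitone (by omega)) 2

lemma mul_transpose_mul_firstCols (hX : IsThinSVD X U s V) {k : ℕ} (h : k ≤ p) :
    X * Xᵀ * firstCols U k h = firstCols U k h * diagonal (fun j => s (Fin.castLE h j) ^ 2) := by
  rw [hX.mul_transpose_eq]
  exact mul_diagonal_mul_transpose_mul_firstCols hX.1 h _

end

section

variable {n q₁ q₂ p₁ p₂ : ℕ} {X : Matrix (Fin n) (Fin q₁) ℝ} {UX : Matrix (Fin n) (Fin p₁) ℝ}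
  {sX : Fin p₁ → ℝ} {VX : Matrix (Fin q₁) (Fin p₁) ℝ} {Y : Matrix (Fin n) (Fin q₂) ℝ}
  {UY : Matrix (Fin n) (Fin p₂) ℝ} {sY : Fin p₂ → ℝ} {VY : Matrix (Fin q₂) (Fin p₂) ℝ}

/-- Weyl's inequality for the eigenvalues `σ_j²` of the Gram matrices. -/
lemma sv_sq_le_sv_sq_add (hX : IsThinSVD X UX sX VX) (hY : IsThinSVD Y UY sY VY) {j : ℕ}
    (hj0 : 0 < j) (hj : j - 1 ≤ p₂) {δ : ℝ} (hE : spec (X * Xᵀ - Y * Yᵀ) ≤ δ) :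
    sv sX j ^ 2 ≤ sv sY j ^ 2 + δ := by
  rcases le_or_gt j p₁ with hjp | hjp
  · have hlow := sub_mul_dotProduct_le_of_spec_sub_le (hX.firstCols_transpose_mul_self hjp)
      (hX.sv_sq_mul_le hjp) hE
    have h := le_of_lowerBound_on_span_of_upperBound_on_orthogonal
      (hX.firstCols_transpose_mul_self hjp) (by omega) hlow (firstCols UY (j - 1) hj)
      (fun v hv => hY.dotProduct_mulVec_le_sv_sq_mul hj hv)
    rw [Nat.sub_add_cancel hj0] at h
    linarith
  · rw [sv_of_lt sX hjp]
    nlinarith [spec_nonneg (X * Xᵀ - Y * Yᵀ), sq_nonneg (sv sY j)]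

lemma spec_one_sub_mul_firstCols_mul_sub_le (hX : IsThinSVD X UX sX VX)
    (hY : IsThinSVD Y UY sY VY) {k : ℕ} (hkX : k ≤ p₁) (hkY : k ≤ p₂) {δ : ℝ}
    (hE : spec (Y * Yᵀ - X * Xᵀ) ≤ δ) :
    spec ((1 - firstCols UY k hkY * (firstCols UY k hkY)ᵀ) * firstCols UX k hkX)
      * (sv sX k ^ 2 - sv sY (k + 1) ^ 2) ≤ δ :=
  spec_one_sub_mul_transpose_mul_mul_sub_le (hX.firstCols_transpose_mul_self hkX)
    (hY.firstCols_transpose_mul_self hkY) (hX.mul_transpose_mul_firstCols hkX)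
    (hY.mul_transpose_mul_firstCols hkY) (hX.sv_sq_mul_le hkX)
    (fun _ hv => hY.dotProduct_mulVec_le_sv_sq_mul hkY hv) hE

end

end IsThinSVD

theorem statement14_general
    {n d t k : ℕ} (hk0 : 0 < k)
    (A : Matrix (Fin n) (Fin d) ℝ)
    (UA : Matrix (Fin n) (Fin (min n d)) ℝ) (sA : Fin (min n d) → ℝ)
    (VA : Matrix (Fin d) (Fin (min n d)) ℝ)
    (hSVD : IsThinSVD A UA sA VA)
    (hkp : k ≤ min n d) (hknt : k ≤ min n t)
    (hgap : sv sA (k + 1) < sv sA k)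
    (G : Matrix (Fin t) (Fin d) ℝ) (ε : ℝ)
    (hGram : spec (A * Gᵀ * G * Aᵀ - A * Aᵀ) ≤ ε * sv sA 1 ^ 2)
    (hε : ε < (sv sA k ^ 2 - sv sA (k + 1) ^ 2) / sv sA 1 ^ 2) :
    k ≤ (A * Gᵀ).rank ∧
    ∀ (UG : Matrix (Fin n) (Fin (min n t)) ℝ) (sG : Fin (min n t) → ℝ)
      (VG : Matrix (Fin t) (Fin (min n t)) ℝ), IsThinSVD (A * Gᵀ) UG sG VG →
      d2 (firstCols UG k hknt) (firstCols UA k hkp)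
        ≤ ε / ((sv sA k ^ 2 - sv sA (k + 1) ^ 2) / sv sA 1 ^ 2 - ε) := by
  set δ := ε * sv sA 1 ^ 2
  set g := sv sA k ^ 2 - sv sA (k + 1) ^ 2
  have hσ1 : 0 < sv sA 1 := ((hSVD.sv_nonneg _).trans_lt hgap).trans_le (hSVD.sv_antitone hk0)
  have hδg : δ < g := by rwa [lt_div_iff₀ (by positivity)] at hε
  have hE : spec (A * Gᵀ * (A * Gᵀ)ᵀ - A * Aᵀ) ≤ δ := by
    rwa [transpose_mul, transpose_transpose, ← Matrix.mul_assoc]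
  have hE' : spec (A * Aᵀ - A * Gᵀ * (A * Gᵀ)ᵀ) ≤ δ := by rwa [spec_sub_comm]
  have hδ : 0 ≤ δ := (spec_nonneg _).trans hE
  refine ⟨?_, fun UG sG VG hSVDG => ?_⟩
  · calc k ≤ (A * Gᵀ * (A * Gᵀ)ᵀ).rank :=
          le_rank_of_mul_dotProduct_le (by nlinarith [sq_nonneg (sv sA (k + 1))])
            (sub_mul_dotProduct_le_of_spec_sub_le (hSVD.firstCols_transpose_mul_self hkp)
              (hSVD.sv_sq_mul_le hkp) hE')
      _ = (A * Gᵀ).rank := rank_self_mul_transpose _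
  · have hWeyl₁ := hSVDG.sv_sq_le_sv_sq_add hSVD (j := k + 1) (by omega) (by simpa using hkp) hE
    have hWeyl₂ := hSVD.sv_sq_le_sv_sq_add hSVDG hk0 (by omega) hE'
    have h₁ := hSVD.spec_one_sub_mul_firstCols_mul_sub_le hSVDG hkp hknt hE
    have h₂ := hSVDG.spec_one_sub_mul_firstCols_mul_sub_le hSVD hknt hkp hE'
    have hbound : ∀ x e, 0 ≤ x → g - δ ≤ e → x * e ≤ δ → x ≤ δ / (g - δ) := fun x e hx he h =>
      (le_div_iff₀ (sub_pos.2 hδg)).2 ((mul_le_mul_of_nonneg_left he hx).trans h)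
    rw [d2, projCol_eq_mul_transpose (hSVDG.firstCols_transpose_mul_self hknt),
      projCol_eq_mul_transpose (hSVD.firstCols_transpose_mul_self hkp),
      show ε / (g / sv sA 1 ^ 2 - ε) = δ / (g - δ) by field_simp; rfl]
    exact spec_mul_transpose_sub_mul_transpose_le (hSVD.firstCols_transpose_mul_self hkp)
      (hSVDG.firstCols_transpose_mul_self hknt) (div_nonneg hδ (sub_pos.2 hδg).le)
      (hbound _ _ (spec_nonneg _) (by linarith) h₁) (hbound _ _ (spec_nonneg _) (by linarith) h₂)

/-- deterministic right-sketching lemma. If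
`‖A Gᵀ G Aᵀ − A Aᵀ‖₂ ≤ ε σ₁(A)²` with `ε < gap_k(A)`, then `A Gᵀ` has rank at least `k`
and `d₂(U_{AGᵀ,k}, U_{A,k}) ≤ ε / (gap_k(A) − ε)`. -/
theorem statement14
    {n d t k : ℕ} (hk0 : 0 < k)
    (A : Matrix (Fin n) (Fin d) ℝ)
    (UA : Matrix (Fin n) (Fin (min n d)) ℝ) (sA : Fin (min n d) → ℝ)
    (VA : Matrix (Fin d) (Fin (min n d)) ℝ)
    (hSVD : IsThinSVD A UA sA VA)
    (hkrank : k ≤ A.rank) (hkp : k ≤ min n d) (hknt : k ≤ min n t)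
    (hgap : sv sA (k + 1) < sv sA k)
    (G : Matrix (Fin t) (Fin d) ℝ) (ε : ℝ)
    (hGram : spec (A * Gᵀ * G * Aᵀ - A * Aᵀ) ≤ ε * sv sA 1 ^ 2)
    (hε : ε < (sv sA k ^ 2 - sv sA (k + 1) ^ 2) / sv sA 1 ^ 2) :
    k ≤ (A * Gᵀ).rank ∧
    ∀ (UG : Matrix (Fin n) (Fin (min n t)) ℝ) (sG : Fin (min n t) → ℝ)
      (VG : Matrix (Fin t) (Fin (min n t)) ℝ), IsThinSVD (A * Gᵀ) UG sG VG →
      d2 (firstCols UG k hknt) (firstCols UA k hkp)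
        ≤ ε / ((sv sA k ^ 2 - sv sA (k + 1) ^ 2) / sv sA 1 ^ 2 - ε) :=
  statement14_general hk0 A UA sA VA hSVD hkp hknt hgap G ε hGram hε
end

section
/- Let A ∈ ℝ^{n×d}, b ∈ ℝ^n, k ≤ rank(A) with σ_k(A) > σ_{k+1}(A). If x̃ ∈ ℝ^d is an (ε, ν)-approximate PCR of rank k, then A x̃ is an (ε, σ_{k+1}(A)·ν)-approximate PCP of rank k. -/
open Matrix MeasureTheory

noncomputable section

/-- The PCR solution for the thin-SVD right factor `VA`: `x_k = V_{A,k}(A V_{A,k})⁺ b`. -/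
def pcrSol {n d p k : ℕ} (A : Matrix (Fin n) (Fin d) ℝ) (b : Fin n → ℝ)
    (VA : Matrix (Fin d) (Fin p) ℝ) (hk : k ≤ p) : Fin d → ℝ :=
  (firstCols VA k hk * pinv (A * firstCols VA k hk)).mulVec b

/-- `x̃` is an `(ε, υ)`-approximate PCR of rank `k` (relative to the thin SVD right factor
`VA` of `A`): `| ‖A x̃ − b‖ − ‖A x_k − b‖ | ≤ ε ‖b‖` and `‖V_{A,k+}ᵀ x̃‖ ≤ υ ‖b‖`. -/
def IsApproxPCR {n d p k : ℕ} (A : Matrix (Fin n) (Fin d) ℝ) (b : Fin n → ℝ)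
    (VA : Matrix (Fin d) (Fin p) ℝ) (hk : k ≤ p) (ε υ : ℝ) (xt : Fin d → ℝ) : Prop :=
  |vnorm (A.mulVec xt - b) - vnorm (A.mulVec (pcrSol A b VA hk) - b)| ≤ ε * vnorm b ∧
  vnorm ((tailCols VA k hk)ᵀ.mulVec xt) ≤ υ * vnorm b

/-- `b̃` is an `(ε, υ)`-approximate PCP of rank `k` (relative to a thin SVD `(UA, ·, VA)`
of `A`): `| ‖b̃ − b‖ − ‖b_k − b‖ | ≤ ε ‖b‖` and `‖U_{A,k+}ᵀ b̃‖ ≤ υ ‖b‖`, where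
`b_k = A x_k` is the PCP solution. -/
def IsApproxPCP {n d p k : ℕ} (A : Matrix (Fin n) (Fin d) ℝ) (b : Fin n → ℝ)
    (UA : Matrix (Fin n) (Fin p) ℝ) (VA : Matrix (Fin d) (Fin p) ℝ) (hk : k ≤ p)
    (ε υ : ℝ) (bt : Fin n → ℝ) : Prop :=
  |vnorm (bt - b) - vnorm (A.mulVec (pcrSol A b VA hk) - b)| ≤ ε * vnorm b ∧
  vnorm ((tailCols UA k hk)ᵀ.mulVec bt) ≤ υ * vnorm b

end

lemma vnorm_le_of_abs_le {m : ℕ} {w y : Fin m → ℝ} {c : ℝ} (hc : 0 ≤ c)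
    (hwy : ∀ j, |w j| ≤ c * |y j|) : vnorm w ≤ c * vnorm y := by
  unfold vnorm
  rw [← Real.sqrt_sq hc, ← Real.sqrt_mul (sq_nonneg c)]
  apply Real.sqrt_le_sqrt
  rw [Finset.mul_sum]
  apply Finset.sum_le_sum
  intro i _
  calc w i ^ 2 = |w i| ^ 2 := (sq_abs _).symm
    _ ≤ (c * |y i|) ^ 2 := by
        apply pow_le_pow_left₀ (abs_nonneg _) (hwy i)
    _ = c ^ 2 * y i ^ 2 := by rw [mul_pow, sq_abs]

/-- approximate PCR implies approximate PCP. If `x̃` is an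
`(ε, ν)`-approximate PCR of rank `k`, then `A x̃` is an
`(ε, σ_{k+1}(A) ν)`-approximate PCP of rank `k`. -/
theorem statement19
    {n d k : ℕ} (hk0 : 0 < k)
    (A : Matrix (Fin n) (Fin d) ℝ) (b : Fin n → ℝ)
    (UA : Matrix (Fin n) (Fin (min n d)) ℝ) (sA : Fin (min n d) → ℝ)
    (VA : Matrix (Fin d) (Fin (min n d)) ℝ)
    (hSVD : IsThinSVD A UA sA VA)
    (hkrank : k ≤ A.rank) (hkp : k ≤ min n d)
    (hgap : sv sA (k + 1) < sv sA k)
    (ε ν : ℝ) (xt : Fin d → ℝ)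
    (h : IsApproxPCR A b VA hkp ε ν xt) :
    IsApproxPCP A b UA VA hkp ε (sv sA (k + 1) * ν) (A.mulVec xt) := by
  obtain ⟨hU, hV, hanti, hpos, hA⟩ := hSVD
  refine ⟨h.1, ?_⟩
  set y := (tailCols VA k hkp)ᵀ.mulVec xt with hy
  -- Uᵀ A = diag(s) Vᵀ
  have h1 : UAᵀ * A = Matrix.diagonal sA * VAᵀ := by
    rw [hA, ← Matrix.mul_assoc, ← Matrix.mul_assoc, hU, Matrix.one_mul]
  have hsv_nonneg : 0 ≤ sv sA (k + 1) := by
    unfold sv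
    split
    · exact hpos _
    · exact le_refl 0
  -- key pointwise identity
  have key : ∀ j : Fin (min n d - k),
      ((tailCols UA k hkp)ᵀ.mulVec (A.mulVec xt)) j
        = sA ⟨k + j.1, by have := j.2; omega⟩ * y j := by
    intro j
    have hj : k + j.1 < min n d := by have := j.2; omega
    have hrow : ∀ l, ((tailCols UA k hkp)ᵀ * A) j l
        = sA ⟨k + j.1, hj⟩ * VAᵀ ⟨k + j.1, hj⟩ l := by
      intro l
      have : ((tailCols UA k hkp)ᵀ * A) j l = (UAᵀ * A) ⟨k + j.1, hj⟩ l := by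
        simp [Matrix.mul_apply, tailCols, Matrix.transpose_apply]
      rw [this, h1, Matrix.diagonal_mul]
    calc ((tailCols UA k hkp)ᵀ.mulVec (A.mulVec xt)) j
        = (((tailCols UA k hkp)ᵀ * A).mulVec xt) j := by
          rw [Matrix.mulVec_mulVec]
      _ = ∑ l, ((tailCols UA k hkp)ᵀ * A) j l * xt l := rfl
      _ = ∑ l, sA ⟨k + j.1, hj⟩ * (VAᵀ ⟨k + j.1, hj⟩ l * xt l) := by
          apply Finset.sum_congr rfl
          intro l _
          rw [hrow l, mul_assoc]
      _ = sA ⟨k + j.1, hj⟩ * ∑ l, VAᵀ ⟨k + j.1, hj⟩ l * xt l := by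
          rw [Finset.mul_sum]
      _ = sA ⟨k + j.1, hj⟩ * y j := by congr 1
  have hbound : vnorm ((tailCols UA k hkp)ᵀ.mulVec (A.mulVec xt))
      ≤ sv sA (k + 1) * vnorm y := by
    apply vnorm_le_of_abs_le hsv_nonneg
    intro j
    have hj : k + j.1 < min n d := by have := j.2; omega
    have hkm : k < min n d := by omega
    rw [key j, abs_mul]
    apply mul_le_mul_of_nonneg_right _ (abs_nonneg _)
    have hs1 : sA ⟨k + j.1, hj⟩ ≤ sA ⟨k, hkm⟩ := by
      apply hanti
      simp [Fin.le_def]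
    have : sv sA (k + 1) = sA ⟨k, hkm⟩ := by
      simp only [sv, Nat.add_sub_cancel]
      rw [dif_pos hkm]
    rw [abs_of_nonneg (hpos _), this]
    exact hs1
  calc vnorm ((tailCols UA k hkp)ᵀ.mulVec (A.mulVec xt))
      ≤ sv sA (k + 1) * vnorm y := hbound
    _ ≤ sv sA (k + 1) * (ν * vnorm b) :=
        mul_le_mul_of_nonneg_left h.2 hsv_nonneg
    _ = sv sA (k + 1) * ν * vnorm b := by ring
end
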